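/- For all real X, Y and γ, one has ∫∫_Γ n(z₁) n(z₂) dz₁ dz₂ = 𝒩( −X, −Y/√(1+γ²), −γ/√(1+γ²) ), where Γ = {(z₁, z₂) ∈ ℝ² : z₁ > Y + γ z₂ and z₂ > X} and 𝒩 is the standard bivariate normal cumulative distribution function. -/

import Mathlib

open Real MeasureTheory

/-- The standard normal density `n(x) = e^{−x²/2}/√(2π)`. -/
noncomputable def stdPDF (x : ℝ) : ℝ := Real.exp (-(x ^ 2) / 2) / Real.sqrt (2 * Real.pi)

/-- The joint cumulative distribution function of the bivariate normal distribution
with zero means, unit variances and correlation `ρ`. -/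
noncomputable def biNormalCDF (x y ρ : ℝ) : ℝ :=
  ∫ z₁ in Set.Iic x, ∫ z₂ in Set.Iic y,
    (2 * Real.pi * Real.sqrt (1 - ρ ^ 2))⁻¹
      * Real.exp (-(z₁ ^ 2 - 2 * ρ * z₁ * z₂ + z₂ ^ 2) / (2 * (1 - ρ ^ 2)))

/-- Translation invariance of the Lebesgue integral over `Ioi`. -/
lemma integral_comp_add_right_Ioi' (f : ℝ → ℝ) (a d : ℝ) :
    (∫ x in Set.Ioi a, f (x + d)) = ∫ x in Set.Ioi (a + d), f x := by
  have A : MeasurableEmbedding fun x : ℝ => x + d :=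
    (Homeomorph.addRight d).isClosedEmbedding.measurableEmbedding
  have h := A.setIntegral_map (μ := volume) (g := f) (s := Set.Ioi (a + d))
  rw [map_add_right_eq_self (volume : Measure ℝ) d] at h
  have hpre : (fun x : ℝ => x + d) ⁻¹' Set.Ioi (a + d) = Set.Ioi a := by
    ext x; simp
  rw [hpre] at h
  exact h.symm

/-- `∫∫_Γ n(z₁) n(z₂) dz₁ dz₂ = 𝒩(−X, −Y/√(1+γ²), −γ/√(1+γ²))`
over `Γ = {z₁ > Y + γ z₂, z₂ > X}`. -/
theorem J4_eq (X Y γ : ℝ) :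
    (∫ z₂ in Set.Ioi X, ∫ z₁ in Set.Ioi (Y + γ * z₂), stdPDF z₁ * stdPDF z₂)
      = biNormalCDF (-X) (-Y / Real.sqrt (1 + γ ^ 2)) (-γ / Real.sqrt (1 + γ ^ 2)) := by
  have hc : (0:ℝ) < Real.sqrt (1 + γ ^ 2) := Real.sqrt_pos.mpr (by positivity)
  set c := Real.sqrt (1 + γ ^ 2) with hcdef
  have hc2 : c ^ 2 = 1 + γ ^ 2 := Real.sq_sqrt (by positivity)
  have hρ : 1 - (-γ / c) ^ 2 = (c ^ 2)⁻¹ := by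
    field_simp
    nlinarith [hc2]
  have hsq : Real.sqrt (1 - (-γ / c) ^ 2) = c⁻¹ := by
    rw [hρ, Real.sqrt_inv, Real.sqrt_sq hc.le]
  -- pointwise integrand identity
  have integrand : ∀ u v : ℝ,
      c * (stdPDF (c * -v + -(γ * u)) * stdPDF (-u))
        = (2 * Real.pi * c⁻¹)⁻¹
            * Real.exp (-(u ^ 2 - 2 * (-γ / c) * u * v + v ^ 2) / (2 * (c ^ 2)⁻¹)) := by
    intro u v
    unfold stdPDF
    have hs : Real.sqrt (2 * Real.pi) * Real.sqrt (2 * Real.pi) = 2 * Real.pi :=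
      Real.mul_self_sqrt (by positivity)
    have hE : -((c * -v + -(γ * u)) ^ 2) / 2 + -((-u) ^ 2) / 2
        = -(u ^ 2 - 2 * (-γ / c) * u * v + v ^ 2) / (2 * (c ^ 2)⁻¹) := by
      field_simp
      linear_combination u ^ 2 * hc2
    rw [div_mul_div_comm, ← Real.exp_add, hs, hE, mul_inv, inv_inv]
    ring
  -- the inner substitution, for fixed u
  have key : ∀ u : ℝ,
      (∫ z₁ in Set.Ioi (Y + γ * (-u)), stdPDF z₁ * stdPDF (-u))
        = ∫ v in Set.Iic (-Y / c),
            (2 * Real.pi * c⁻¹)⁻¹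
              * Real.exp (-(u ^ 2 - 2 * (-γ / c) * u * v + v ^ 2) / (2 * (c ^ 2)⁻¹)) := by
    intro u
    have hYc : c * (Y / c) = Y := by field_simp
    have h2 := integral_comp_add_right_Ioi' (fun x => stdPDF x * stdPDF (-u)) Y (-(γ * u))
    have h3 := integral_comp_mul_left_Ioi
      (fun x => stdPDF (x + -(γ * u)) * stdPDF (-u)) (Y / c) hc
    have h4 := integral_comp_neg_Iic (-(Y / c))
      (fun w => stdPDF (c * w + -(γ * u)) * stdPDF (-u))
    simp only [neg_neg] at h4
    -- assemble: LHS = c * (∫ over Iic)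
    have hA : (∫ z₁ in Set.Ioi (Y + γ * (-u)), stdPDF z₁ * stdPDF (-u))
        = c * ∫ v in Set.Iic (-(Y / c)),
            stdPDF (c * -v + -(γ * u)) * stdPDF (-u) := by
      rw [h4, h3, hYc, smul_eq_mul, ← mul_assoc, mul_inv_cancel₀ hc.ne', one_mul, h2]
      congr 1
      ring
    rw [hA, ← integral_const_mul]
    rw [show -Y / c = -(Y / c) by ring]
    exact setIntegral_congr_fun measurableSet_Iic fun v _ => integrand u v
  -- outer substitution
  simp only [biNormalCDF]
  simp only [hsq]
  simp only [hρ]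
  have outer := integral_comp_neg_Iic (-X)
    (fun z₂ => ∫ z₁ in Set.Ioi (Y + γ * z₂), stdPDF z₁ * stdPDF z₂)
  simp only [neg_neg] at outer
  rw [← outer]
  exact setIntegral_congr_fun measurableSet_Iic fun u _ => key u
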